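/- Let Ĥ be the graph whose vertices are the pairs (i, j) with i ∈ {1,2,3}, j ∈ {1,2,3,4}, excluding the three pairs (1,1), (2,2), (3,3), where (i₁, j₁) is adjacent to (i₂, j₂) if and only if i₁ ≠ i₂ and j₁ ≠ j₂. Then the chromatic number of Ĥ equals 3 and Kc(Ĥ, 4) ≥ 2. -/

import Mathlib

open SimpleGraph

/-- The spanning subgraph of `G` consisting of the edges both of whose endpoints
receive color `i` or color `j` under `φ`. -/
def kempeSubgraph {V : Type*} (G : SimpleGraph V) {k : ℕ} (φ : V → Fin k) (i j : Fin k) :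
    SimpleGraph V where
  Adj u v := G.Adj u v ∧ (φ u = i ∨ φ u = j) ∧ (φ v = i ∨ φ v = j)
  symm := ⟨fun u v ⟨h, hu, hv⟩ => ⟨h.symm, hv, hu⟩⟩
  loopless := ⟨fun v h => G.loopless.irrefl v h.1⟩

/-- `ψ` is obtained from `φ` by a single `i,j`-Kempe swap:  the colors `i` and `j` are
interchanged on the connected component (of the subgraph induced by colors `i,j`)
containing `w`, and nothing else changes. -/
def IsKempeSwap {V : Type*} (G : SimpleGraph V) {k : ℕ}
    (φ ψ : G.Coloring (Fin k)) : Prop :=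
  ∃ (i j : Fin k) (w : V), ∀ v : V,
    ((kempeSubgraph G (fun x => φ x) i j).Reachable w v → ψ v = Equiv.swap i j (φ v)) ∧
    (¬ (kempeSubgraph G (fun x => φ x) i j).Reachable w v → ψ v = φ v)

/-- Kempe `k`-equivalence of proper `k`-colorings:  one can be transformed into the
other by a sequence of Kempe swaps. -/
def KempeEquiv {V : Type*} (G : SimpleGraph V) (k : ℕ)
    (φ ψ : G.Coloring (Fin k)) : Prop :=
  Relation.EqvGen (IsKempeSwap G) φ ψ

/-- `Kc G k` is the number of Kempe equivalence classes of proper `k`-colorings of `G`. -/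
noncomputable def Kc {V : Type*} (G : SimpleGraph V) (k : ℕ) : ℕ :=
  Nat.card (Quot (KempeEquiv G k))

/-- `G` can be obtained from a bipartite graph by adding `ℓ` edges. -/
def BipartitePlus {V : Type*} (G : SimpleGraph V) (ℓ : ℕ) : Prop :=
  ∃ E : Finset (Sym2 V), E.card = ℓ ∧ ↑E ⊆ G.edgeSet ∧
    (G.deleteEdges ↑E).Colorable 2

/-- `K₃ × K₄`: the categorical (tensor) product of complete graphs, on
`Fin 3 × Fin 4`, where `(i₁,j₁)` is adjacent to `(i₂,j₂)` iff `i₁ ≠ i₂` and `j₁ ≠ j₂`. -/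
def Htensor : SimpleGraph (Fin 3 × Fin 4) where
  Adj p q := p.1 ≠ q.1 ∧ p.2 ≠ q.2
  symm := ⟨fun p q h => ⟨h.1.symm, h.2.symm⟩⟩
  loopless := ⟨fun p h => h.1 rfl⟩

/-- The vertices of `Ĥ`: pairs `(i,j)` with `i ∈ Fin 3`, `j ∈ Fin 4`, excluding the
three "diagonal" pairs (which correspond to `(1,1), (2,2), (3,3)` in the 1-indexed
description). -/
abbrev HhatVert : Type := {p : Fin 3 × Fin 4 // (p.1 : ℕ) ≠ (p.2 : ℕ)}

/-- The graph `Ĥ`, i.e. `K₃ × K₄` with the three diagonal vertices deleted. -/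
def Hhat : SimpleGraph HhatVert where
  Adj p q := p.1.1 ≠ q.1.1 ∧ p.1.2 ≠ q.1.2
  symm := ⟨fun p q h => ⟨h.1.symm, h.2.symm⟩⟩
  loopless := ⟨fun p h => h.1 rfl⟩

/-!
The rows give a proper 3-coloring of `Ĥ`, and `(0,1), (1,2), (2,3)` form a triangle.

For the Kempe classes, call a 4-coloring a column coloring if its color depends only on the
column. Any two columns of `Ĥ` are joined by an edge, so a column coloring assigns the four
colors bijectively to the columns; and the subgraph spanned by any two columns is connected.
Hence every Kempe chain of a column coloring is a whole pair of color classes, and a Kempe swap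
only permutes the colors. Being a column coloring is therefore a Kempe invariant, which the
column coloring has and the row coloring does not.
-/

section Kempe

variable {V : Type*} {G : SimpleGraph V} {k : ℕ}

instance [DecidableRel G.Adj] (φ : V → Fin k) (i j : Fin k) :
    DecidableRel (kempeSubgraph G φ i j).Adj :=
  fun _ _ => inferInstanceAs (Decidable (_ ∧ _))

def IsKempeFrozen (G : SimpleGraph V) (φ : V → Fin k) : Prop :=
  ∀ i j, i ≠ j → ∀ u v, (φ u = i ∨ φ u = j) → (φ v = i ∨ φ v = j) →
    (kempeSubgraph G φ i j).Reachable u v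

lemma kempeSubgraph_congr {φ ψ : V → Fin k} {i j i' j' : Fin k}
    (h : ∀ v, (φ v = i ∨ φ v = j) ↔ (ψ v = i' ∨ ψ v = j')) :
    kempeSubgraph G φ i j = kempeSubgraph G ψ i' j' := by
  ext u v
  simp only [kempeSubgraph, h]

lemma eq_or_of_kempeSubgraph_reachable {φ : V → Fin k} {i j : Fin k} {u v : V}
    (h : (kempeSubgraph G φ i j).Reachable u v) : u = v ∨ φ u = i ∨ φ u = j := by
  obtain ⟨_ | ⟨hadj, _⟩⟩ := h
  · exact Or.inl rfl
  · exact Or.inr hadj.2.1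

lemma IsKempeSwap.symm {φ ψ : G.Coloring (Fin k)} (h : IsKempeSwap G φ ψ) :
    IsKempeSwap G ψ φ := by
  obtain ⟨i, j, w, h⟩ := h
  have hmem : ∀ v, (ψ v = i ∨ ψ v = j) ↔ (φ v = i ∨ φ v = j) := by
    intro v
    by_cases hr : (kempeSubgraph G (fun x => φ x) i j).Reachable w v
    · rw [(h v).1 hr, Equiv.swap_apply_eq_iff, Equiv.swap_apply_eq_iff, Equiv.swap_apply_left,
        Equiv.swap_apply_right, or_comm]
    · rw [(h v).2 hr]
  refine ⟨i, j, w, fun v => ?_⟩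
  rw [kempeSubgraph_congr hmem]
  exact ⟨fun hr => by rw [(h v).1 hr, Equiv.swap_apply_self], fun hr => ((h v).2 hr).symm⟩

lemma IsKempeFrozen.comp_perm {φ : V → Fin k} (hφ : IsKempeFrozen G φ)
    (σ : Equiv.Perm (Fin k)) :
    IsKempeFrozen G (fun v => σ (φ v)) := by
  intro i j hij u v hu hv
  have hmem : ∀ x,
      (σ (φ x) = i ∨ σ (φ x) = j) ↔ (φ x = σ.symm i ∨ φ x = σ.symm j) := by
    simp only [← Equiv.eq_symm_apply, implies_true]
  rw [kempeSubgraph_congr hmem]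
  exact hφ _ _ (σ.symm.injective.ne hij) u v ((hmem u).1 hu) ((hmem v).1 hv)

/-- On a frozen coloring a Kempe swap on a chain of colors `i, j` swaps `i` and `j` everywhere
or nowhere. -/
lemma IsKempeSwap.exists_perm {φ ψ : G.Coloring (Fin k)} (hφ : IsKempeFrozen G φ)
    (h : IsKempeSwap G φ ψ) : ∃ σ : Equiv.Perm (Fin k), ∀ v, ψ v = σ (φ v) := by
  obtain ⟨i, j, w, h⟩ := h
  by_cases hw : φ w = i ∨ φ w = j
  · refine ⟨Equiv.swap i j, fun v => ?_⟩
    by_cases hr : (kempeSubgraph G (fun x => φ x) i j).Reachable w v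
    · exact (h v).1 hr
    rw [(h v).2 hr]
    by_cases hij : i = j
    · rw [hij, Equiv.swap_self, Equiv.refl_apply]
    by_cases hv : φ v = i ∨ φ v = j
    · exact absurd (hφ i j hij w v hw hv) hr
    · rw [not_or] at hv
      exact (Equiv.swap_apply_of_ne_of_ne hv.1 hv.2).symm
  · refine ⟨1, fun v => ?_⟩
    by_cases hr : (kempeSubgraph G (fun x => φ x) i j).Reachable w v
    · obtain rfl | hw' := eq_or_of_kempeSubgraph_reachable hr
      · rw [not_or] at hw
        exact ((h w).1 hr).trans (Equiv.swap_apply_of_ne_of_ne hw.1 hw.2)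
      · exact absurd hw' hw
    · exact (h v).2 hr

lemma KempeEquiv.iff_of_isKempeSwap_imp {P : G.Coloring (Fin k) → Prop}
    (hP : ∀ φ ψ, IsKempeSwap G φ ψ → P φ → P ψ) {φ ψ : G.Coloring (Fin k)}
    (h : KempeEquiv G k φ ψ) : P φ ↔ P ψ := by
  induction h with
  | rel φ ψ hr => exact ⟨hP φ ψ hr, hP ψ φ hr.symm⟩
  | refl => rfl
  | symm _ _ _ ih => exact ih.symm
  | trans _ _ _ _ _ ih₁ ih₂ => exact ih₁.trans ih₂

lemma two_le_Kc_of_isKempeSwap_imp [Finite V] {P : G.Coloring (Fin k) → Prop}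
    (hP : ∀ φ ψ, IsKempeSwap G φ ψ → P φ → P ψ) {φ ψ : G.Coloring (Fin k)}
    (hφ : P φ) (hψ : ¬ P ψ) : 2 ≤ Kc G k := by
  have : Nontrivial (Quot (KempeEquiv G k)) := by
    refine ⟨Quot.mk _ φ, Quot.mk _ ψ, fun e => hψ ?_⟩
    have hequiv := (Relation.EqvGen.is_equivalence (IsKempeSwap G)).eqvGen_iff.mp (Quot.eq.mp e)
    exact (KempeEquiv.iff_of_isKempeSwap_imp hP hequiv).mp hφ
  exact Finite.one_lt_card

end Kempe

namespace Hhat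

instance : DecidableRel Hhat.Adj := fun _ _ => inferInstanceAs (Decidable (_ ∧ _))

def rowColoring : Hhat.Coloring (Fin 3) :=
  Coloring.mk (fun v => v.1.1) fun h => h.1

def columnColoring : Hhat.Coloring (Fin 4) :=
  Coloring.mk (fun v => v.1.2) fun h => h.2

theorem chromaticNumber_eq_three : Hhat.chromaticNumber = 3 := by
  refine le_antisymm (by exact_mod_cast rowColoring.colorable.chromaticNumber_le) ?_
  let triangle : Fin 3 → HhatVert :=
    ![⟨(0, 1), by decide⟩, ⟨(1, 2), by decide⟩, ⟨(2, 3), by decide⟩]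
  exact le_chromaticNumber_of_pairwise_adj (by simp) triangle (by unfold Pairwise; decide)

def IsColumnColoring (φ : HhatVert → Fin 4) : Prop :=
  ∃ c : Fin 4 → Fin 4, ∀ v, φ v = c v.1.2

lemma isKempeFrozen_column : IsKempeFrozen Hhat (fun v : HhatVert => v.1.2) := by
  unfold IsKempeFrozen
  decide

lemma exists_adj_of_column_ne : ∀ a b : Fin 4, a ≠ b → ∃ u v : HhatVert,
    u.1.2 = a ∧ v.1.2 = b ∧ Hhat.Adj u v := by
  decide

lemma isColumnColoring_of_isKempeSwap {φ ψ : Hhat.Coloring (Fin 4)} (h : IsKempeSwap Hhat φ ψ)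
    (hφ : IsColumnColoring φ) : IsColumnColoring ψ := by
  obtain ⟨c, hc⟩ := hφ
  have hc_inj : Function.Injective c := by
    intro a b hab
    by_contra hne
    obtain ⟨u, v, rfl, rfl, huv⟩ := exists_adj_of_column_ne a b hne
    exact φ.valid huv (by rw [hc u, hc v, hab])
  have hfrozen : IsKempeFrozen Hhat φ := by
    convert isKempeFrozen_column.comp_perm (Equiv.ofBijective c hc_inj.bijective_of_finite)
    exact hc _
  obtain ⟨τ, hτ⟩ := h.exists_perm hfrozen
  exact ⟨fun a => τ (c a), fun v => by rw [hτ, hc]⟩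

lemma isColumnColoring_columnColoring : IsColumnColoring columnColoring :=
  ⟨id, fun _ => rfl⟩

lemma not_isColumnColoring_recolor_rowColoring :
    ¬ IsColumnColoring (Hhat.recolorOfEmbedding Fin.castSuccEmb rowColoring) := by
  rintro ⟨c, hc⟩
  have h03 := hc ⟨(0, 3), by decide⟩
  have h13 := hc ⟨(1, 3), by decide⟩
  exact absurd (h03.trans h13.symm) (by decide)

end Hhat

/-- `Ĥ` has chromatic number 3 and at least two Kempe equivalence classes of
4-colorings. -/
theorem stmt4 : Hhat.chromaticNumber = 3 ∧ 2 ≤ Kc Hhat 4 :=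
  ⟨Hhat.chromaticNumber_eq_three,
    two_le_Kc_of_isKempeSwap_imp (fun _ _ => Hhat.isColumnColoring_of_isKempeSwap)
      Hhat.isColumnColoring_columnColoring Hhat.not_isColumnColoring_recolor_rowColoring⟩
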